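/- For any squarefree positive integer q and any integer m, ∑_{d | q} μ(d)²/φ(d)² · c_d(m) = ∏_{p | q, p | m} (1 + 1/(p-1)) · ∏_{p | q, p ∤ m} (1 - 1/(p-1)²), where c_d(m) is Ramanujan's sum. -/

import Mathlib

/-! Reducing the fractions `b / d`, `1 ≤ b ≤ d`, to lowest terms lists every reduced fraction
`a / e` with `e ∣ d` exactly once, so `∑_{e ∣ d} c_e(m) = ∑_{b=1}^{d} e(bm/d)`, which is `d` if
`d ∣ m` and `0` otherwise. Möbius inversion then makes `d ↦ c_d(m)` multiplicative, hence so is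
`d ↦ μ(d)²/φ(d)² c_d(m)`, and its divisor sum over a squarefree `q` is
`∏_{p ∣ q} (1 + c_p(m)/(p-1)²)` with `c_p(m) = p - 1` or `-1` according as `p ∣ m` or not. -/

open Finset ArithmeticFunction
open scoped ArithmeticFunction.zeta ArithmeticFunction.Moebius

noncomputable def ramanujanSum (m : ℤ) : ArithmeticFunction ℂ :=
  ⟨fun d => ∑ a ∈ (Icc 1 d).filter (fun a => Nat.gcd a d = 1),
    Complex.exp (2 * Real.pi * Complex.I * (a : ℂ) * (m : ℂ) / (d : ℂ)), by simp⟩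

theorem ramanujanSum_apply (m : ℤ) (d : ℕ) :
    ramanujanSum m d = ∑ a ∈ (Icc 1 d).filter (fun a => Nat.gcd a d = 1),
      Complex.exp (2 * Real.pi * Complex.I * (a : ℂ) * (m : ℂ) / (d : ℂ)) := rfl

noncomputable def idIfDvd (m : ℤ) : ArithmeticFunction ℂ :=
  ⟨fun d => if (d : ℤ) ∣ m then (d : ℂ) else 0, by simp⟩

theorem idIfDvd_apply (m : ℤ) (d : ℕ) :
    idIfDvd m d = if (d : ℤ) ∣ m then (d : ℂ) else 0 := rfl

theorem isMultiplicative_idIfDvd (m : ℤ) : (idIfDvd m).IsMultiplicative := by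
  refine ⟨by simp [idIfDvd_apply], fun {x y} hxy => ?_⟩
  have hdvd : (x : ℤ) * y ∣ m ↔ (x : ℤ) ∣ m ∧ (y : ℤ) ∣ m := by
    simp only [← Nat.cast_mul, Int.natCast_dvd]
    exact ⟨fun h => ⟨dvd_of_mul_right_dvd h, dvd_of_mul_left_dvd h⟩,
      fun h => hxy.mul_dvd_of_dvd_of_dvd h.1 h.2⟩
  by_cases hx : (x : ℤ) ∣ m <;> by_cases hy : (y : ℤ) ∣ m <;> simp [idIfDvd_apply, hdvd, hx, hy]

theorem sum_Icc_pow_eq_ite {K : Type*} [Field K] [DecidableEq K] {z : K} {d : ℕ}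
    (hz : z ^ d = 1) :
    ∑ a ∈ Icc 1 d, z ^ a = if z = 1 then (d : K) else 0 := by
  split_ifs with h
  · simp [h]
  · rw [← Ico_add_one_right_eq_Icc, geom_sum_Ico h (by omega), pow_succ, hz]
    simp

theorem sum_Icc_exp_eq_idIfDvd (m : ℤ) {d : ℕ} (hd : d ≠ 0) :
    ∑ a ∈ Icc 1 d, Complex.exp (2 * Real.pi * Complex.I * (a : ℂ) * (m : ℂ) / (d : ℂ)) =
      idIfDvd m d := by
  have hω := Complex.isPrimitiveRoot_exp d hd
  set ω := Complex.exp (2 * Real.pi * Complex.I / d)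
  have hterm : ∀ a : ℕ,
      Complex.exp (2 * Real.pi * Complex.I * (a : ℂ) * (m : ℂ) / (d : ℂ)) = (ω ^ m) ^ a := by
    intro a
    rw [← zpow_natCast, ← zpow_mul, ← Complex.exp_int_mul]
    push_cast
    ring_nf
  have hroot : (ω ^ m) ^ d = 1 := by
    rw [← zpow_natCast, ← zpow_mul, mul_comm, zpow_mul, zpow_natCast, hω.pow_eq_one, one_zpow]
  simp_rw [hterm, sum_Icc_pow_eq_ite hroot, hω.zpow_eq_one_iff_dvd, idIfDvd_apply]

theorem sum_divisors_sum_coprime_Icc {M : Type*} [AddCommMonoid M] (f : ℕ → M) {d : ℕ}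
    (hd : d ≠ 0) :
    ∑ e ∈ d.divisors, ∑ a ∈ (Icc 1 e).filter (fun a => Nat.gcd a e = 1), f (a * (d / e)) =
      ∑ b ∈ Icc 1 d, f b := by
  rw [sum_sigma']
  refine sum_nbij' (fun x => x.2 * (d / x.1)) (fun b => ⟨d / Nat.gcd b d, b / Nat.gcd b d⟩)
    ?_ ?_ ?_ ?_ (fun _ _ => rfl)
  · rintro ⟨e, a⟩ hx
    simp only [mem_sigma, Nat.mem_divisors, mem_filter, mem_Icc] at hx ⊢
    obtain ⟨⟨⟨k, rfl⟩, hd⟩, ⟨ha, hae⟩, -⟩ := hx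
    have he : 0 < e := Nat.pos_of_ne_zero (left_ne_zero_of_mul hd)
    rw [Nat.mul_div_cancel_left k he]
    exact ⟨Nat.one_le_iff_ne_zero.mpr (mul_ne_zero (by omega) (right_ne_zero_of_mul hd)),
      Nat.mul_le_mul_right k hae⟩
  · intro b hb
    simp only [mem_Icc] at hb
    have hg : 0 < Nat.gcd b d := Nat.gcd_pos_of_pos_left d hb.1
    simp only [mem_sigma, Nat.mem_divisors, mem_filter, mem_Icc]
    exact ⟨⟨Nat.div_dvd_of_dvd (Nat.gcd_dvd_right b d), hd⟩,
      ⟨(Nat.one_le_div_iff hg).mpr (Nat.le_of_dvd hb.1 (Nat.gcd_dvd_left b d)),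
        Nat.div_le_div_right hb.2⟩, Nat.coprime_div_gcd_div_gcd hg⟩
  · rintro ⟨e, a⟩ hx
    simp only [mem_sigma, Nat.mem_divisors, mem_filter, mem_Icc] at hx
    obtain ⟨⟨⟨k, rfl⟩, hd⟩, -, hcop⟩ := hx
    have hk : 0 < k := Nat.pos_of_ne_zero (right_ne_zero_of_mul hd)
    have he : 0 < e := Nat.pos_of_ne_zero (left_ne_zero_of_mul hd)
    simp only [Nat.mul_div_cancel_left k he, Nat.gcd_mul_right, hcop, one_mul,
      Nat.mul_div_cancel _ hk]
  · intro b _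
    simp only
    rw [Nat.div_div_self (Nat.gcd_dvd_right b d) hd, Nat.div_mul_cancel (Nat.gcd_dvd_left b d)]

theorem coe_zeta_mul_ramanujanSum (m : ℤ) :
    (ζ : ArithmeticFunction ℂ) * ramanujanSum m = idIfDvd m := by
  ext d
  rcases eq_or_ne d 0 with rfl | hd
  · simp
  rw [coe_zeta_mul_apply, ← sum_Icc_exp_eq_idIfDvd m hd,
    ← sum_divisors_sum_coprime_Icc (fun b : ℕ =>
      Complex.exp (2 * Real.pi * Complex.I * (b : ℂ) * (m : ℂ) / (d : ℂ))) hd]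
  refine sum_congr rfl fun e he => ?_
  rw [ramanujanSum_apply]
  refine sum_congr rfl fun a _ => ?_
  obtain ⟨k, rfl⟩ := Nat.dvd_of_mem_divisors he
  have he0 : (e : ℂ) ≠ 0 := by exact_mod_cast left_ne_zero_of_mul hd
  have hk0 : (k : ℂ) ≠ 0 := by exact_mod_cast right_ne_zero_of_mul hd
  rw [Nat.mul_div_cancel_left k (Nat.pos_of_ne_zero (left_ne_zero_of_mul hd))]
  push_cast
  field_simp

theorem ramanujanSum_eq_moebius_mul (m : ℤ) :
    ramanujanSum m = (μ : ArithmeticFunction ℂ) * idIfDvd m := by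
  rw [← coe_zeta_mul_ramanujanSum, ← mul_assoc, coe_moebius_mul_coe_zeta, one_mul]

theorem isMultiplicative_ramanujanSum (m : ℤ) : (ramanujanSum m).IsMultiplicative := by
  rw [ramanujanSum_eq_moebius_mul]
  exact isMultiplicative_moebius.intCast.mul (isMultiplicative_idIfDvd m)

theorem ramanujanSum_prime (m : ℤ) {p : ℕ} (hp : p.Prime) :
    ramanujanSum m p = idIfDvd m p - 1 := by
  have h := DFunLike.congr_fun (coe_zeta_mul_ramanujanSum m) p
  simp only [coe_zeta_mul_apply, hp.divisors, sum_pair hp.one_lt.ne,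
    (isMultiplicative_ramanujanSum m).map_one] at h
  rw [← h]
  ring

theorem one_add_ramanujanSum_prime_div_sq (m : ℤ) {p : ℕ} (hp : p.Prime) :
    1 + ramanujanSum m p / ((p : ℂ) - 1) ^ 2 =
      if (p : ℤ) ∣ m then 1 + 1 / ((p : ℂ) - 1) else 1 - 1 / ((p : ℂ) - 1) ^ 2 := by
  have hp1 : (p : ℂ) - 1 ≠ 0 := sub_ne_zero.mpr (by exact_mod_cast hp.one_lt.ne')
  rw [ramanujanSum_prime m hp, idIfDvd_apply]
  split_ifs
  · field_simp
  · ring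

noncomputable def moebiusSqDivTotientSq : ArithmeticFunction ℂ :=
  ⟨fun d => ((μ d : ℤ) : ℂ) ^ 2 / (d.totient : ℂ) ^ 2, by simp⟩

theorem moebiusSqDivTotientSq_apply (d : ℕ) :
    moebiusSqDivTotientSq d = ((μ d : ℤ) : ℂ) ^ 2 / (d.totient : ℂ) ^ 2 := rfl

theorem isMultiplicative_moebiusSqDivTotientSq : moebiusSqDivTotientSq.IsMultiplicative := by
  refine ⟨by simp [moebiusSqDivTotientSq_apply], fun {x y} hxy => ?_⟩
  simp only [moebiusSqDivTotientSq_apply, isMultiplicative_moebius.map_mul_of_coprime hxy,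
    Nat.totient_mul hxy]
  push_cast
  ring

theorem stmt_11_general (q : ℕ) (hq : Squarefree q) (m : ℤ) :
    ∑ d ∈ q.divisors,
      (((ArithmeticFunction.moebius d : ℤ) : ℂ) ^ 2 / (Nat.totient d : ℂ) ^ 2) *
        ∑ a ∈ (Finset.Icc 1 d).filter (fun a => Nat.gcd a d = 1),
          Complex.exp (2 * Real.pi * Complex.I * (a : ℂ) * (m : ℂ) / (d : ℂ)) =
    (∏ p ∈ q.primeFactors.filter (fun p : ℕ => (p : ℤ) ∣ m), (1 + 1 / ((p : ℂ) - 1))) *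
      ∏ p ∈ q.primeFactors.filter (fun p : ℕ => ¬ (p : ℤ) ∣ m),
        (1 - 1 / ((p : ℂ) - 1) ^ 2) := by
  set F := moebiusSqDivTotientSq.pmul (ramanujanSum m)
  have hF : F.IsMultiplicative :=
    isMultiplicative_moebiusSqDivTotientSq.pmul (isMultiplicative_ramanujanSum m)
  have hFp : ∀ p ∈ q.primeFactors, 1 + F p =
      if (p : ℤ) ∣ m then 1 + 1 / ((p : ℂ) - 1) else 1 - 1 / ((p : ℂ) - 1) ^ 2 := by
    intro p hp
    have hp := Nat.prime_of_mem_primeFactors hp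
    rw [← one_add_ramanujanSum_prime_div_sq m hp]
    simp [F, moebiusSqDivTotientSq_apply, moebius_apply_prime hp, Nat.totient_prime hp,
      Nat.cast_sub hp.one_le, inv_mul_eq_div]
  calc _ = ∑ d ∈ q.divisors, F d := rfl
    _ = ∏ p ∈ q.primeFactors, (1 + F p) := (hF.prodPrimeFactors_one_add_of_squarefree hq).symm
    _ = _ := by rw [prod_congr rfl hFp, prod_ite]

/-- For squarefree `q`:
`∑_{d ∣ q} μ(d)²/φ(d)² c_d(m) = ∏_{p∣q, p∣m} (1 + 1/(p-1)) ∏_{p∣q, p∤m} (1 - 1/(p-1)²)`,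
where `c_d(m) = ∑_{(a,d)=1} e(am/d)` is the Ramanujan sum. -/
theorem stmt_11 (q : ℕ) (hq : Squarefree q) (hq0 : 0 < q) (m : ℤ) :
    ∑ d ∈ q.divisors,
      (((ArithmeticFunction.moebius d : ℤ) : ℂ) ^ 2 / (Nat.totient d : ℂ) ^ 2) *
        ∑ a ∈ (Finset.Icc 1 d).filter (fun a => Nat.gcd a d = 1),
          Complex.exp (2 * Real.pi * Complex.I * (a : ℂ) * (m : ℂ) / (d : ℂ)) =
    (∏ p ∈ q.primeFactors.filter (fun p : ℕ => (p : ℤ) ∣ m), (1 + 1 / ((p : ℂ) - 1))) *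
      ∏ p ∈ q.primeFactors.filter (fun p : ℕ => ¬ (p : ℤ) ∣ m),
        (1 - 1 / ((p : ℂ) - 1) ^ 2) :=
  stmt_11_general q hq m
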